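/- arXiv:math/0401021 — 5 statements merged into one kernel-verified Lean document; each statement's English description precedes it below -/
import Mathlib

section
/- For every L ≥ 0 there exists a constant C > 0 such that: for every map f from EuclideanSpace ℝ (Fin 4) to EuclideanSpace ℝ (Fin 6) that is Lipschitz with constant L, and every ε ∈ (0, 1], the Lebesgue volume of the ε-thickening (Metric.thickening ε) of the image f '' (closedBall 0 1) is at most C · ε². (The image of the unit 4-ball under a Lipschitz map into ℝ⁶ has an ε-neighborhood of volume O(ε²): covering the ball by ≈ ε⁻⁴ balls of radius ε, each is mapped into a ball of radius Lε, whose ε-neighborhood has volume ≈ ε⁶.) -/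
/-!
A maximal `ε`-separated subset of a ball of radius `R` in an `n`-dimensional normed space is an
`ε`-cover of it, and since the `ε/2`-balls around its points are disjoint and lie in the ball of
radius `R + ε/2`, comparing Haar measures bounds its size by `(1 + 2R/ε)ⁿ`. A `K`-Lipschitz map
sends this cover to one of the image by `Kε`-balls, so the `ε`-thickening of the image of the
unit ball of `ℝ⁴` lies in `(3/ε)⁴` balls of radius `(1 + K)ε` in `ℝ⁶`, of total volume `O(ε²)`.
-/

open MeasureTheory Metric Module
open scoped NNReal ENNReal

namespace Metric

variable {E : Type*} [NormedAddCommGroup E] [NormedSpace ℝ E] [FiniteDimensional ℝ E]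
  {ε : ℝ≥0} {R : ℝ}

theorem IsSeparated.card_le_of_subset_closedBall (hε : 0 < ε) (hR : 0 ≤ R) {x : E}
    {D : Finset E} (hDR : (D : Set E) ⊆ closedBall x R) (hD : IsSeparated ε (D : Set E)) :
    (D.card : ℝ) ≤ (1 + 2 * R / ε) ^ finrank ℝ E := by
  borelize E
  set μ : Measure E := Measure.addHaar
  set r : ℝ := ε / 2 with hr_def
  have hr : 0 < r := by positivity
  have hdisj : (D : Set E).PairwiseDisjoint (ball · r) := by
    intro c hc d hd hcd
    refine ball_disjoint_ball ?_
    have hsep : (ε : ℝ≥0∞) < edist c d := hD hc hd hcd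
    rw [edist_nndist, ENNReal.coe_lt_coe, ← NNReal.coe_lt_coe, coe_nndist] at hsep
    linarith
  have hsub : (⋃ c ∈ D, ball c r) ⊆ ball x (R + r) :=
    Set.iUnion₂_subset fun c hc => ball_subset_ball' <| by
      linarith [mem_closedBall.mp (hDR hc)]
  have hvol : (D.card : ℝ≥0∞) * ENNReal.ofReal (r ^ finrank ℝ E)
      ≤ ENNReal.ofReal ((R + r) ^ finrank ℝ E) := by
    rw [← ENNReal.mul_le_mul_iff_left (measure_ball_pos μ 0 one_pos).ne' measure_ball_lt_top.ne,
      mul_assoc, ← Measure.addHaar_ball_of_pos μ 0 hr,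
      ← Measure.addHaar_ball_of_pos μ x (by positivity)]
    calc (D.card : ℝ≥0∞) * μ (ball 0 r) = ∑ c ∈ D, μ (ball c r) := by
          simp [Measure.addHaar_ball_center μ _ r]
      _ = μ (⋃ c ∈ D, ball c r) :=
          (measure_biUnion_finset hdisj fun _ _ => measurableSet_ball).symm
      _ ≤ μ (ball x (R + r)) := measure_mono hsub
  rw [← ENNReal.ofReal_natCast, ← ENNReal.ofReal_mul (by positivity),
    ENNReal.ofReal_le_ofReal_iff (by positivity), ← le_div_iff₀ (by positivity), ← div_pow] at hvol
  refine hvol.trans_eq (congrArg (· ^ _) ?_)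
  rw [hr_def]
  field_simp
  ring

theorem IsSeparated.finite_of_subset_closedBall (hε : 0 < ε) (hR : 0 ≤ R) {x : E} {C : Set E}
    (hCR : C ⊆ closedBall x R) (hC : IsSeparated ε C) : C.Finite := by
  by_contra hinf
  obtain ⟨t, htC, ht⟩ :=
    Set.Infinite.exists_subset_card_eq hinf (⌊(1 + 2 * R / ε) ^ finrank ℝ E⌋₊ + 1)
  have hcard := card_le_of_subset_closedBall hε hR (htC.trans hCR) (hC.subset htC)
  rw [ht, Nat.cast_add_one] at hcard
  exact (Nat.lt_floor_add_one _).not_ge hcard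

theorem packingNumber_closedBall_le (hε : 0 < ε) (hR : 0 ≤ R) (x : E) :
    packingNumber ε (closedBall x R) ≤ ⌊(1 + 2 * R / ε) ^ finrank ℝ E⌋₊ := by
  refine iSup₂_le fun C hCR => iSup_le fun hC => ?_
  have hfin := hC.finite_of_subset_closedBall hε hR hCR
  rw [hfin.encard_eq_coe_toFinset_card, Nat.cast_le]
  exact Nat.le_floor <|
    IsSeparated.card_le_of_subset_closedBall hε hR (by simpa using hCR) (by simpa using hC)

theorem exists_finset_isCover_closedBall (hε : 0 < ε) (hR : 0 ≤ R) (x : E) :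
    ∃ T : Finset E, IsCover ε (closedBall x R) (T : Set E) ∧
      (T.card : ℝ) ≤ (1 + 2 * R / ε) ^ finrank ℝ E := by
  have hP : packingNumber ε (closedBall x R) ≠ ⊤ :=
    ((packingNumber_closedBall_le hε hR x).trans_lt (ENat.natCast_lt_top _)).ne
  have hfin : (maximalSeparatedSet ε (closedBall x R)).Finite := by
    rw [← Set.encard_ne_top_iff, encard_maximalSeparatedSet hP]
    exact hP
  refine ⟨hfin.toFinset, by simpa using isCover_maximalSeparatedSet hP, ?_⟩
  exact IsSeparated.card_le_of_subset_closedBall hε hR (by simpa using maximalSeparatedSet_subset)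
    (by simpa using isSeparated_maximalSeparatedSet)

end Metric

namespace LipschitzWith

variable {F : Type*} [NormedAddCommGroup F] [MeasurableSpace F] [BorelSpace F]
  (μ : Measure F) [μ.IsAddHaarMeasure] {K : ℝ≥0}

theorem measure_thickening_image_le {X : Type*} [PseudoMetricSpace X] {f : X → F}
    (hf : LipschitzWith K f) {s : Set X} {δ : ℝ≥0} {T : Finset X}
    (hT : IsCover δ s (T : Set X)) (ε : ℝ) :
    μ (thickening ε (f '' s)) ≤ T.card * μ (ball 0 (ε + K * δ)) := by
  have hsub : thickening ε (f '' s) ⊆ ⋃ t ∈ T, ball (f t) (ε + K * δ) := by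
    intro y hy
    obtain ⟨_, ⟨z, hz, rfl⟩, hyz⟩ := mem_thickening_iff.mp hy
    obtain ⟨t, ht, hzt⟩ := Set.mem_iUnion₂.mp (hT.subset_iUnion_closedBall hz)
    refine Set.mem_iUnion₂.mpr ⟨t, ht, ?_⟩
    calc dist y (f t) ≤ dist y (f z) + dist (f z) (f t) := dist_triangle _ _ _
      _ < ε + K * δ := add_lt_add_of_lt_of_le hyz <|
          (hf.dist_le_mul z t).trans (by gcongr; exact mem_closedBall.mp hzt)
  calc μ (thickening ε (f '' s)) ≤ μ (⋃ t ∈ T, ball (f t) (ε + K * δ)) := measure_mono hsub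
    _ ≤ ∑ t ∈ T, μ (ball (f t) (ε + K * δ)) := measure_biUnion_finset_le T _
    _ = T.card * μ (ball 0 (ε + K * δ)) := by simp [Measure.addHaar_ball_center μ _]

theorem measure_thickening_image_closedBall_le [NormedSpace ℝ F] [FiniteDimensional ℝ F] {E : Type*}
    [NormedAddCommGroup E] [NormedSpace ℝ E] [FiniteDimensional ℝ E] {f : E → F}
    (hf : LipschitzWith K f) {ε : ℝ≥0} (hε : 0 < ε) {R : ℝ} (hR : 0 ≤ R) (x : E) :
    μ (thickening ε (f '' closedBall x R)) ≤ ENNReal.ofReal ((1 + 2 * R / ε) ^ finrank ℝ E) *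
      ENNReal.ofReal (((1 + K) * ε) ^ finrank ℝ F) * μ (ball 0 1) := by
  obtain ⟨T, hT, hcard⟩ := exists_finset_isCover_closedBall hε hR x
  calc μ (thickening ε (f '' closedBall x R)) ≤ T.card * μ (ball 0 (ε + K * ε)) :=
        hf.measure_thickening_image_le μ hT ε
    _ = T.card * ENNReal.ofReal (((1 + K) * ε) ^ finrank ℝ F) * μ (ball 0 1) := by
        rw [show (ε + K * ε : ℝ) = (1 + K) * ε by ring,
          Measure.addHaar_ball_of_pos μ 0 (by positivity), mul_assoc]
    _ ≤ _ := by
        gcongr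
        rw [← ENNReal.ofReal_natCast]
        exact ENNReal.ofReal_le_ofReal hcard

end LipschitzWith

/-- The image of the unit 4-ball under an `L`-Lipschitz map into `ℝ⁶` has an
`ε`-neighborhood of volume `O(ε²)`: for every `L ≥ 0` there is `C > 0` such
that for every `L`-Lipschitz `f : ℝ⁴ → ℝ⁶` and every `ε ∈ (0, 1]`, the
Lebesgue volume of the `ε`-thickening of `f '' (closedBall 0 1)` is at most
`C · ε²`. -/
theorem volume_thickening_image_ball_le (L : ℝ) (hL : 0 ≤ L) :
    ∃ C : ℝ, 0 < C ∧
      ∀ f : EuclideanSpace ℝ (Fin 4) → EuclideanSpace ℝ (Fin 6),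
        (∀ x y, dist (f x) (f y) ≤ L * dist x y) →
        ∀ ε : ℝ, 0 < ε → ε ≤ 1 →
          MeasureTheory.volume
              (Metric.thickening ε (f '' Metric.closedBall 0 1)) ≤
            ENNReal.ofReal (C * ε ^ 2) := by
  set B := (volume (ball (0 : EuclideanSpace ℝ (Fin 6)) 1)).toReal
  have hB : 0 < B := ENNReal.toReal_pos (measure_ball_pos _ _ one_pos).ne' measure_ball_lt_top.ne
  refine ⟨3 ^ 4 * (1 + L) ^ 6 * B, by positivity, fun f hf ε hε hε1 => ?_⟩
  have hcount : (1 + 2 * 1 / ε) ^ 4 ≤ (3 / ε) ^ 4 := by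
    gcongr
    rw [mul_one, one_add_div hε.ne']
    gcongr
    linarith
  set K : ℝ≥0 := ⟨L, hL⟩
  set δ : ℝ≥0 := ⟨ε, hε.le⟩
  have hbound := (LipschitzWith.of_dist_le_mul (K := K) hf).measure_thickening_image_closedBall_le
    volume (show 0 < δ from hε) zero_le_one 0
  rw [finrank_euclideanSpace_fin, finrank_euclideanSpace_fin,
    ← ENNReal.ofReal_toReal (a := volume (ball (0 : EuclideanSpace ℝ (Fin 6)) 1))
      measure_ball_lt_top.ne,
    ← ENNReal.ofReal_mul (by positivity), ← ENNReal.ofReal_mul (by positivity)] at hbound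
  refine hbound.trans (ENNReal.ofReal_le_ofReal ?_)
  change (1 + 2 * 1 / ε) ^ 4 * ((1 + L) * ε) ^ 6 * B ≤ _
  calc (1 + 2 * 1 / ε) ^ 4 * ((1 + L) * ε) ^ 6 * B ≤ (3 / ε) ^ 4 * ((1 + L) * ε) ^ 6 * B := by
        gcongr
    _ = 3 ^ 4 * (1 + L) ^ 6 * B * ε ^ 2 := by field_simp
end

section
/- Let n ≥ 1 be a natural number, q > 1 a real number, and β₀ ∈ (0, 1). Define a sequence β : ℕ → ℝ by β 0 = β₀ and β (N+1) = (β N)^q / 2. Then there exists N₀ such that for all N ≥ N₀, Real.exp (−(N : ℝ)^(1/(n:ℝ))) * β N ≥ β (N+1) / 2. (That is, for a polynomial-type transversality function t(β) = β^q/2 with q > 1, the globalization inequality exp(−N^{1/n}) · β_N < β_{N+1}/2 required by Donaldson's patching argument eventually fails, since β_N decays doubly exponentially while exp(−N^{1/n}) decays only subexponentially.) -/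
/-!
Since `β₀ < 1`, the recursion gives `β N ≤ β₀ ^ q ^ N`, so `β N ^ (q - 1)` decays like
`exp (-(q - 1) (-log β₀) q ^ N)`, doubly exponentially. As `β (N + 1) / 2 ≤ β N ^ (q - 1) * β N`,
the inequality follows once `N ^ (1 / n) ≤ N ≤ (q - 1) (-log β₀) q ^ N`, which holds for all large `N`.
-/

open Real Filter

lemma eventually_natCast_le_mul_pow {a q : ℝ} (ha : 0 < a) (hq : 1 < q) :
    ∀ᶠ N : ℕ in atTop, (N : ℝ) ≤ a * q ^ N := by
  filter_upwards [(isLittleO_coe_const_pow_of_one_lt (R := ℝ) hq).bound ha] with N hN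
  rwa [Real.norm_natCast, norm_pow, Real.norm_of_nonneg (by linarith)] at hN

lemma natCast_rpow_one_div_le_self {N : ℕ} (hN : 1 ≤ N) (n : ℕ) :
    (N : ℝ) ^ (1 / (n : ℝ)) ≤ N :=
  Real.rpow_le_self_of_one_le (by exact_mod_cast hN) (by simpa using Nat.cast_inv_le_one n)

section HalfPowerRecursion

variable {q : ℝ} {β : ℕ → ℝ} (hrec : ∀ N, β (N + 1) = β N ^ q / 2)
include hrec

lemma pos_of_rpow_div_two_rec (h0 : 0 < β 0) (N : ℕ) : 0 < β N := by
  induction N with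
  | zero => exact h0
  | succ k ih => rw [hrec k]; positivity

lemma le_rpow_pow_of_rpow_div_two_rec (h0 : 0 < β 0) (hq : 0 ≤ q) (N : ℕ) :
    β N ≤ β 0 ^ (q ^ N) := by
  induction N with
  | zero => simp
  | succ k ih =>
    have hk := pos_of_rpow_div_two_rec hrec h0 k
    calc β (k + 1) ≤ β k ^ q := by rw [hrec k]; linarith [rpow_pos_of_pos hk q]
      _ ≤ (β 0 ^ (q ^ k)) ^ q := rpow_le_rpow hk.le ih hq
      _ = β 0 ^ (q ^ (k + 1)) := by rw [← rpow_mul h0.le, pow_succ]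

lemma rpow_sub_one_le_exp_of_rpow_div_two_rec (h0 : 0 < β 0) (hq : 1 ≤ q) (N : ℕ) :
    β N ^ (q - 1) ≤ exp ((q - 1) * log (β 0) * q ^ N) :=
  calc β N ^ (q - 1) ≤ (β 0 ^ (q ^ N)) ^ (q - 1) :=
        rpow_le_rpow (pos_of_rpow_div_two_rec hrec h0 N).le
          (le_rpow_pow_of_rpow_div_two_rec hrec h0 (by linarith) N) (by linarith)
    _ = exp ((q - 1) * log (β 0) * q ^ N) := by
        rw [← rpow_mul h0.le, rpow_def_of_pos h0]
        ring_nf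

lemma succ_div_two_le_rpow_sub_one_mul_of_rpow_div_two_rec (h0 : 0 < β 0) (N : ℕ) :
    β (N + 1) / 2 ≤ β N ^ (q - 1) * β N := by
  have hN := pos_of_rpow_div_two_rec hrec h0 N
  rw [rpow_sub_one hN.ne', div_mul_cancel₀ _ hN.ne', hrec N]
  linarith [rpow_pos_of_pos hN q]

end HalfPowerRecursion

theorem polynomial_transversality_fails_globalization_general
    (n : ℕ) (q : ℝ) (hq : 1 < q)
    (β₀ : ℝ) (hβ₀ : 0 < β₀) (hβ₀1 : β₀ < 1)
    (β : ℕ → ℝ) (h0 : β 0 = β₀)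
    (hrec : ∀ N : ℕ, β (N + 1) = β N ^ q / 2) :
    ∃ N₀ : ℕ, ∀ N ≥ N₀,
      β (N + 1) / 2 ≤ Real.exp (-(N : ℝ) ^ (1 / (n : ℝ))) * β N := by
  subst h0
  have ha : 0 < (q - 1) * -log (β 0) := mul_pos (by linarith) (neg_pos.2 (log_neg hβ₀ hβ₀1))
  refine eventually_atTop.mp ?_
  filter_upwards [eventually_natCast_le_mul_pow ha hq, eventually_ge_atTop 1] with N hN hN1
  have hdecay : β N ^ (q - 1) ≤ exp (-(N : ℝ) ^ (1 / (n : ℝ))) :=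
    calc β N ^ (q - 1) ≤ exp ((q - 1) * log (β 0) * q ^ N) :=
          rpow_sub_one_le_exp_of_rpow_div_two_rec hrec hβ₀ hq.le N
      _ ≤ exp (-(N : ℝ) ^ (1 / (n : ℝ))) := by
          gcongr
          linarith [natCast_rpow_one_div_le_self hN1 n]
  calc β (N + 1) / 2 ≤ β N ^ (q - 1) * β N :=
        succ_div_two_le_rpow_sub_one_mul_of_rpow_div_two_rec hrec hβ₀ N
    _ ≤ exp (-(N : ℝ) ^ (1 / (n : ℝ))) * β N :=
        mul_le_mul_of_nonneg_right hdecay (pos_of_rpow_div_two_rec hrec hβ₀ N).le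

/-- For a polynomial-type transversality function `t(β) = β^q / 2` with
`q > 1`, the globalization inequality `exp(−N^{1/n}) · β_N < β_{N+1}/2`
required by Donaldson's patching argument eventually fails: the sequence
defined by `β 0 = β₀ ∈ (0,1)`, `β (N+1) = (β N)^q / 2` satisfies
`exp(−N^{1/n}) · β_N ≥ β_{N+1}/2` for all large `N`. -/
theorem polynomial_transversality_fails_globalization
    (n : ℕ) (hn : 1 ≤ n) (q : ℝ) (hq : 1 < q)
    (β₀ : ℝ) (hβ₀ : 0 < β₀) (hβ₀1 : β₀ < 1)
    (β : ℕ → ℝ) (h0 : β 0 = β₀)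
    (hrec : ∀ N : ℕ, β (N + 1) = β N ^ q / 2) :
    ∃ N₀ : ℕ, ∀ N ≥ N₀,
      β (N + 1) / 2 ≤ Real.exp (-(N : ℝ) ^ (1 / (n : ℝ))) * β N :=
  polynomial_transversality_fails_globalization_general n q hq β₀ hβ₀ hβ₀1 β h0 hrec
end

section
/- Let n ≥ 1 be a natural number and d > 0 a real number. Then there exists β₀' ∈ (0, 1) such that for every β₀ ∈ (0, β₀'], defining a sequence β : ℕ → ℝ by β 0 = β₀ and β (N+1) = β N / (2 * (Real.log (1 / β N))^d), the sequence is well defined and positive, and there exists N₀ such that for all N ≥ N₀, Real.exp (−(N : ℝ)^(1/(n:ℝ))) * β N < β (N+1) / 2. (That is, for the logarithmic transversality function t(β) = β / (log β⁻¹)^d, the ratio β_{N+1}/β_N decays only polynomially in N, so the globalization inequality exp(−N^{1/n}) · β_N < β_{N+1}/2 required by Donaldson's patching argument does hold for all large N.) -/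
open Filter Real Asymptotics

/-! With `L N = log (1 / β N)` the recursion reads `L (N+1) = L N + log 2 + d log (L N)`, and
`β N ≤ e⁻¹` keeps `L N ≥ 1`. Since `log L ≤ 2 √L`, `√L` grows at most linearly, so `L N` is
polynomial in `N` and `log (4 L_N^d) = O(log N) = o(N^{1/n})`. The required inequality is
exactly `4 L_N^d < exp (N^{1/n})`. -/

lemma log_le_two_mul_sqrt {x : ℝ} (hx : 0 ≤ x) : log x ≤ 2 * √x := by
  have h := log_le_rpow_div hx one_half_pos
  rwa [← sqrt_eq_rpow, div_eq_mul_inv, mul_comm, inv_div, div_one] at h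

lemma le_add_mul_of_forall_succ_le_add {s : ℕ → ℝ} {c : ℝ} (h : ∀ N, s (N + 1) ≤ s N + c)
    (N : ℕ) : s N ≤ s 0 + c * N := by
  induction N with
  | zero => simp
  | succ N ih => push_cast; linarith [h N]

lemma sqrt_le_add_mul_of_succ_le_add_log {L : ℕ → ℝ} {d : ℝ} (hd : 0 ≤ d) (hL : ∀ N, 0 ≤ L N)
    (hrec : ∀ N, L (N + 1) ≤ L N + 1 + d * log (L N)) (N : ℕ) :
    √(L N) ≤ √(L 0) + (d + 1) * N := by
  refine le_add_mul_of_forall_succ_le_add (s := fun N => √(L N)) (fun N => ?_) N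
  rw [sqrt_le_left (by positivity)]
  have hsq := sq_sqrt (hL N)
  nlinarith [hrec N, mul_le_mul_of_nonneg_left (log_le_two_mul_sqrt (hL N)) hd, sqrt_nonneg (L N)]

lemma le_mul_sq_of_succ_le_add_log {L : ℕ → ℝ} {d : ℝ} (hd : 0 ≤ d) (hL : ∀ N, 0 ≤ L N)
    (hrec : ∀ N, L (N + 1) ≤ L N + 1 + d * log (L N)) {N : ℕ} (hN : 1 ≤ N) :
    L N ≤ ((√(L 0) + d + 1) * N) ^ 2 := by
  have hN' : (1 : ℝ) ≤ N := by exact_mod_cast hN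
  rw [← sqrt_le_left (by positivity)]
  nlinarith [sqrt_le_add_mul_of_succ_le_add_log hd hL hrec N, sqrt_nonneg (L 0)]

lemma eventually_add_mul_log_lt_rpow (A B : ℝ) {r : ℝ} (hr : 0 < r) :
    ∀ᶠ x in atTop, A + B * log x < x ^ r := by
  have htendsto := tendsto_rpow_atTop hr
  have hlittle : (fun x => A + B * log x) =o[atTop] fun x => x ^ r :=
    (isLittleO_const_left.2 (Or.inr (tendsto_norm_atTop_atTop.comp htendsto))).add
      ((isLittleO_log_rpow_atTop hr).const_mul_left B)
  filter_upwards [hlittle.bound one_half_pos, htendsto.eventually_gt_atTop 0] with x hx hpos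
  rw [norm_eq_abs, norm_eq_abs, abs_of_pos hpos] at hx
  linarith [le_abs_self (A + B * log x)]

lemma one_le_log_one_div {b : ℝ} (hb : 0 < b) (hb' : b ≤ exp (-1)) : 1 ≤ log (1 / b) := by
  rw [one_div, log_inv, le_neg, log_le_iff_le_exp hb]
  exact hb'

lemma pos_le_exp_neg_one_of_rec {β : ℕ → ℝ} {d : ℝ} (hd : 0 ≤ d) (h0 : 0 < β 0)
    (h0' : β 0 ≤ exp (-1)) (hrec : ∀ N, β (N + 1) = β N / (2 * log (1 / β N) ^ d)) (N : ℕ) :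
    0 < β N ∧ β N ≤ exp (-1) := by
  induction N with
  | zero => exact ⟨h0, h0'⟩
  | succ N ih =>
    obtain ⟨hpos, hle⟩ := ih
    have hX : 1 ≤ log (1 / β N) ^ d := one_le_rpow (one_le_log_one_div hpos hle) hd
    rw [hrec N]
    exact ⟨by positivity, (div_le_self hpos.le (by linarith)).trans hle⟩

lemma log_one_div_div_two_mul_rpow {b d : ℝ} (hb : 0 < b) (hL : 0 < log (1 / b)) :
    log (1 / (b / (2 * log (1 / b) ^ d))) = log (1 / b) + log 2 + d * log (log (1 / b)) := by
  rw [one_div_div, mul_div_assoc, ← mul_one_div (log (1 / b) ^ d), ← mul_assoc,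
    log_mul (by positivity) (by positivity), log_mul two_ne_zero (by positivity), log_rpow hL]
  ring

lemma exp_neg_mul_lt_div_two_mul_rpow_div_two {b L d t : ℝ} (hb : 0 < b) (hL : 0 < L)
    (h : log 4 + d * log L < t) : exp (-t) * b < b / (2 * L ^ d) / 2 := by
  have h4 : 4 * L ^ d < exp t := by
    rw [← log_lt_iff_lt_exp (by positivity), log_mul four_ne_zero (by positivity), log_rpow hL]
    exact h
  rw [div_div, mul_right_comm, exp_neg, ← div_eq_inv_mul]
  exact div_lt_div_of_pos_left hb (by positivity) (by linarith)

/-- For the logarithmic transversality function `t(β) = β / (log β⁻¹)^d`, the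
globalization inequality `exp(−N^{1/n}) · β_N < β_{N+1}/2` required by
Donaldson's patching argument does hold for all large `N`: there is a
threshold `β₀' ∈ (0,1)` such that for every starting value `β₀ ∈ (0, β₀']`,
the sequence `β 0 = β₀`, `β (N+1) = β N / (2 (log (1/β N))^d)` is positive and
eventually satisfies the inequality. -/
theorem log_transversality_globalization
    (n : ℕ) (hn : 1 ≤ n) (d : ℝ) (hd : 0 < d) :
    ∃ β₀' : ℝ, 0 < β₀' ∧ β₀' < 1 ∧
      ∀ β₀ : ℝ, 0 < β₀ → β₀ ≤ β₀' →
        ∀ β : ℕ → ℝ, β 0 = β₀ →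
          (∀ N : ℕ, β (N + 1) = β N / (2 * Real.log (1 / β N) ^ d)) →
          (∀ N : ℕ, 0 < β N) ∧
            ∃ N₀ : ℕ, ∀ N ≥ N₀,
              Real.exp (-(N : ℝ) ^ (1 / (n : ℝ))) * β N < β (N + 1) / 2 := by
  refine ⟨exp (-1), exp_pos _, exp_lt_one_iff.2 (by norm_num), ?_⟩
  rintro β₀ hβ₀ hle β rfl hrec
  have hβ := pos_le_exp_neg_one_of_rec hd.le hβ₀ hle hrec
  set L : ℕ → ℝ := fun N => log (1 / β N)
  have hL : ∀ N, 1 ≤ L N := fun N => one_le_log_one_div (hβ N).1 (hβ N).2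
  have hLrec : ∀ N, L (N + 1) ≤ L N + 1 + d * log (L N) := fun N => by
    simp only [L, hrec N, log_one_div_div_two_mul_rpow (hβ N).1 (by linarith [hL N])]
    linarith [log_two_lt_d9]
  set K := √(L 0) + d + 1
  have hK : 0 < K := by positivity
  have hlogL : ∀ N ≥ 1, log (L N) ≤ 2 * log K + 2 * log N := fun N hN => by
    have hN' : (0 : ℝ) < N := by exact_mod_cast hN
    have hLN := le_mul_sq_of_succ_le_add_log hd.le (fun N => by linarith [hL N]) hLrec hN
    calc log (L N) ≤ log ((K * N) ^ 2) := log_le_log (by linarith [hL N]) hLN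
      _ = 2 * log K + 2 * log N := by rw [log_pow, log_mul hK.ne' hN'.ne']; push_cast; ring
  have hr : (0 : ℝ) < 1 / n := one_div_pos.2 (Nat.cast_pos.2 hn)
  obtain ⟨N₀, hN₀⟩ := eventually_atTop.1 <| (eventually_ge_atTop 1).and <|
    tendsto_natCast_atTop_atTop.eventually
      (eventually_add_mul_log_lt_rpow (log 4 + d * (2 * log K)) (2 * d) hr)
  refine ⟨fun N => (hβ N).1, N₀, fun N hN => ?_⟩
  obtain ⟨hN1, hlt⟩ := hN₀ N hN
  rw [hrec N]
  refine exp_neg_mul_lt_div_two_mul_rpow_div_two (hβ N).1 (by linarith [hL N]) ?_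
  nlinarith [mul_le_mul_of_nonneg_left (hlogL N hN1) hd.le]
end

section
/- Hamiltonian flows are symplectomorphisms, in the following form on standard symplectic ℝ²ⁿ. Let V = (EuclideanSpace ℝ (Fin n)) × (EuclideanSpace ℝ (Fin n)) with the standard symplectic form ω((x, y), (x', y')) = ⟪x, y'⟫ − ⟪y, x'⟫. Let H : V → ℝ be twice continuously differentiable, and let X_H : V → V be its Hamiltonian vector field, characterized by ω(X_H p, v) = (fderiv ℝ H p) v for all p, v ∈ V (explicitly X_H (x, y) = (∇_y H, −∇_x H)). Suppose φ : ℝ → V → V is a flow of X_H that is continuously differentiable in (t, p), i.e. φ 0 = id and for all t and p the derivative in t of s ↦ φ s p at t equals X_H (φ t p). Then for every t, every p ∈ V and all tangent vectors v, w ∈ V, ω((fderiv ℝ (φ t) p) v, (fderiv ℝ (φ t) p) w) = ω(v, w); that is, each time-t map φ t preserves ω. -/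
open scoped RealInnerProductSpace

/-- The standard symplectic form on `ℝ²ⁿ = ℝⁿ × ℝⁿ`:
`ω((x, y), (x', y')) = ⟪x, y'⟫ − ⟪y, x'⟫`. -/
noncomputable def stdSymplecticForm (n : ℕ)
    (p q : EuclideanSpace ℝ (Fin n) × EuclideanSpace ℝ (Fin n)) : ℝ :=
  ⟪p.1, q.2⟫ - ⟪p.2, q.1⟫

/-! The derivative `D t = d(φ t)_p` solves the variational equation
`D' = dX_H(φ t p) ∘ D`, `D 0 = id`, obtained by differentiating
`φ t q = q + ∫₀ᵗ X_H (φ s q) ds` under the integral sign. Differentiating `ω (X_H q) = dH_q`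
gives `ω (dX_H a) b = D²H (a, b)`, which is symmetric in `a, b`; as `ω` is antisymmetric,
`ω (dX_H a) b + ω a (dX_H b) = 0`. Hence `t ↦ ω (D t v) (D t w)` has zero derivative and stays
equal to `ω v w`. -/

section Flow

variable {E F : Type*} [NormedAddCommGroup E] [NormedSpace ℝ E]
  [NormedAddCommGroup F] [NormedSpace ℝ F]

theorem hasFDerivAt_intervalIntegral_of_contDiff [ProperSpace E] [CompleteSpace F]
    {f : ℝ → E → F} (hf : ContDiff ℝ 1 (Function.uncurry f)) (a b : ℝ) (x₀ : E) :
    HasFDerivAt (fun x => ∫ s in a..b, f s x) (∫ s in a..b, fderiv ℝ (f s) x₀) x₀ := by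
  have hf' : Continuous fun z : ℝ × E => fderiv ℝ (f z.1) z.2 :=
    (ContDiff.fderiv (f := fun z : ℝ × E => f z.1)
      (hf.comp (contDiff_fst.fst.prodMk contDiff_snd)) contDiff_snd (zero_add 1).le).continuous
  obtain ⟨C, hC⟩ := (isCompact_uIcc.prod (isCompact_closedBall x₀ 1)).exists_bound_of_continuousOn
      hf'.continuousOn
  have hf_slice : ∀ x, Continuous (f · x) :=
    fun x => hf.continuous.comp (continuous_id.prodMk continuous_const)
  refine intervalIntegral.hasFDerivAt_integral_of_dominated_of_fderiv_le (bound := fun _ => C)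
    (Metric.ball_mem_nhds x₀ one_pos) (.of_forall fun x => (hf_slice x).aestronglyMeasurable)
    ((hf_slice x₀).intervalIntegrable a b)
    (hf'.comp (continuous_id.prodMk continuous_const)).aestronglyMeasurable
    (.of_forall fun s hs x hx =>
      hC (s, x) ⟨Set.uIoc_subset_uIcc hs, Metric.ball_subset_closedBall hx⟩)
    intervalIntegrable_const (.of_forall fun s _ x _ => ?_)
  exact ((hf.comp (contDiff_const.prodMk contDiff_id)).differentiable one_ne_zero x).hasFDerivAt

variable {X : E → E} {φ : ℝ → E → E}

theorem flow_apply_eq_add_integral [CompleteSpace E] (hX : Continuous X) (hφ0 : φ 0 = id)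
    (hflow : ∀ t p, HasDerivAt (fun s => φ s p) (X (φ t p)) t) (t : ℝ) (p : E) :
    φ t p = p + ∫ s in 0..t, X (φ s p) := by
  have hcont : Continuous fun s => X (φ s p) :=
    hX.comp (continuous_iff_continuousAt.2 fun s => (hflow s p).continuousAt)
  rw [intervalIntegral.integral_eq_sub_of_hasDerivAt (fun s _ => hflow s p)
    (hcont.intervalIntegrable 0 t), hφ0, id, add_sub_cancel]

variable [ProperSpace E]

theorem fderiv_flow_eq_id_add_integral (hX : ContDiff ℝ 1 X)
    (hφ : ContDiff ℝ 1 (Function.uncurry φ)) (hφ0 : φ 0 = id)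
    (hflow : ∀ t p, HasDerivAt (fun s => φ s p) (X (φ t p)) t) (t : ℝ) (p : E) :
    fderiv ℝ (φ t) p =
      ContinuousLinearMap.id ℝ E + ∫ s in 0..t, (fderiv ℝ X (φ s p)).comp (fderiv ℝ (φ s) p) := by
  have hrep : φ t = fun q => q + ∫ s in 0..t, X (φ s q) :=
    funext (flow_apply_eq_add_integral hX.continuous hφ0 hflow t)
  have hchain : ∀ s,
      fderiv ℝ (fun q => X (φ s q)) p = (fderiv ℝ X (φ s p)).comp (fderiv ℝ (φ s) p) :=
    fun s => fderiv_comp p (hX.differentiable one_ne_zero _)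
      ((hφ.comp (contDiff_const.prodMk contDiff_id)).differentiable one_ne_zero p)
  simp_rw [← hchain, hrep]
  exact ((hasFDerivAt_id p).add <| hasFDerivAt_intervalIntegral_of_contDiff
    (f := fun s q => X (φ s q)) (hX.comp hφ) 0 t p).fderiv

theorem hasDerivAt_fderiv_flow (hX : ContDiff ℝ 1 X)
    (hφ : ContDiff ℝ 1 (Function.uncurry φ)) (hφ0 : φ 0 = id)
    (hflow : ∀ t p, HasDerivAt (fun s => φ s p) (X (φ t p)) t) (p : E) (t : ℝ) :
    HasDerivAt (fun t => fderiv ℝ (φ t) p) ((fderiv ℝ X (φ t p)).comp (fderiv ℝ (φ t) p)) t := by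
  have hφp : Continuous fun s => φ s p :=
    hφ.continuous.comp (continuous_id.prodMk continuous_const)
  have hDφ : Continuous fun s => fderiv ℝ (φ s) p :=
    (hφ.fderiv contDiff_const (zero_add 1).le).continuous
  rw [show (fun t => fderiv ℝ (φ t) p) = _ from
    funext fun t => fderiv_flow_eq_id_add_integral hX hφ hφ0 hflow t p]
  exact (((hX.continuous_fderiv one_ne_zero).comp hφp).clm_comp hDφ
    |>.integral_hasStrictDerivAt 0 t).hasDerivAt.const_add _

end Flow

section Bilinear

variable {E : Type*} [NormedAddCommGroup E] [NormedSpace ℝ E]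

def IsInfinitesimalIsometry (ω : E →L[ℝ] E →L[ℝ] ℝ) (A : E →L[ℝ] E) : Prop :=
  ∀ a b, ω (A a) b + ω a (A b) = 0

theorem IsInfinitesimalIsometry.apply_apply_eq_of_hasDerivAt {ω : E →L[ℝ] E →L[ℝ] ℝ}
    {D A : ℝ → E →L[ℝ] E} (hA : ∀ t, IsInfinitesimalIsometry ω (A t))
    (hD : ∀ t, HasDerivAt D ((A t).comp (D t)) t) (t : ℝ) (v w : E) :
    ω (D t v) (D t w) = ω (D 0 v) (D 0 w) := by
  have hDu : ∀ u t, HasDerivAt (fun t => D t u) (A t (D t u)) t :=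
    fun u t => (ContinuousLinearMap.apply ℝ E u).hasFDerivAt.comp_hasDerivAt t (hD t)
  have hderiv : ∀ t, HasDerivAt (fun t => ω (D t v) (D t w)) 0 t := fun t => by
    have := ω.hasDerivAt_of_bilinear (fun _ => hDu v t) (fun _ => hDu w t)
    rwa [add_comm, hA t] at this
  exact is_const_of_deriv_eq_zero (fun t => (hderiv t).differentiableAt)
    (fun t => (hderiv t).deriv) t 0

variable {ω : E →L[ℝ] E →L[ℝ] ℝ} {H : E → ℝ} {XH : E → E}

theorem contDiff_of_apply_eq_fderiv [FiniteDimensional ℝ E] {k : WithTop ℕ∞}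
    (hω : Function.Injective ω) (hXH : ∀ p, ω (XH p) = fderiv ℝ H p)
    (hH : ContDiff ℝ (k + 1) H) :
    ContDiff ℝ k XH := by
  have hL := ContinuousLinearMap.HasLeftInverse.of_injective_of_finiteDimensional hω
  have : XH = hL.leftInverse ∘ fderiv ℝ H := by
    funext p
    rw [Function.comp_apply, ← hXH, hL.leftInverse_leftInverse]
  rw [this]
  exact hL.leftInverse.contDiff.comp (hH.fderiv_right le_rfl)

theorem isInfinitesimalIsometry_fderiv_of_apply_eq_fderiv (hω : ∀ a b, ω a b = -ω b a)
    (hXH : ∀ p, ω (XH p) = fderiv ℝ H p) (hH : ContDiff ℝ 2 H) {q : E}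
    (hX : DifferentiableAt ℝ XH q) : IsInfinitesimalIsometry ω (fderiv ℝ XH q) := by
  have hHess : fderiv ℝ (fderiv ℝ H) q = ω.comp (fderiv ℝ XH q) := by
    rw [show fderiv ℝ H = fun p => ω (XH p) from funext fun p => (hXH p).symm]
    exact (ω.hasFDerivAt.comp q hX.hasFDerivAt).fderiv
  intro a b
  have hsymm := hH.contDiffAt.isSymmSndFDerivAt (x := q) (by simp) a b
  rw [hHess] at hsymm
  rw [hω a, ← ContinuousLinearMap.comp_apply, hsymm, ContinuousLinearMap.comp_apply,
    add_neg_cancel]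

end Bilinear

section StdSymplectic

variable (n : ℕ)

local notation "V" => EuclideanSpace ℝ (Fin n) × EuclideanSpace ℝ (Fin n)

noncomputable def stdSymplecticFormL : V →L[ℝ] V →L[ℝ] ℝ :=
  (innerSL ℝ).bilinearComp (.fst ℝ _ _) (.snd ℝ _ _) -
    (innerSL ℝ).bilinearComp (.snd ℝ _ _) (.fst ℝ _ _)

@[simp]
theorem stdSymplecticFormL_apply (p q : V) : stdSymplecticFormL n p q = stdSymplecticForm n p q :=
  rfl

theorem stdSymplecticFormL_antisymm (p q : V) :
    stdSymplecticFormL n p q = -stdSymplecticFormL n q p := by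
  simp only [stdSymplecticFormL_apply, stdSymplecticForm, real_inner_comm p.1, real_inner_comm p.2]
  ring

theorem stdSymplecticFormL_injective : Function.Injective (stdSymplecticFormL n) := by
  refine (injective_iff_map_eq_zero _).2 fun p hp => ?_
  have h₁ : p.1 = 0 := by simpa [stdSymplecticForm] using congr($hp (0, p.1))
  have h₂ : p.2 = 0 := by simpa [stdSymplecticForm] using congr($hp (p.2, 0))
  exact Prod.ext h₁ h₂

end StdSymplectic

/-- Hamiltonian flows are symplectomorphisms: if `H : ℝ²ⁿ → ℝ` is `C²`, `X_H`
is its Hamiltonian vector field (characterized by `ω(X_H p, v) = dH_p(v)`),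
and `φ` is a `C¹` flow of `X_H` with `φ 0 = id`, then every time-`t` map
`φ t` preserves the standard symplectic form `ω`. -/
theorem hamiltonian_flow_is_symplectomorphism (n : ℕ)
    (H : EuclideanSpace ℝ (Fin n) × EuclideanSpace ℝ (Fin n) → ℝ)
    (hH : ContDiff ℝ 2 H)
    (XH : EuclideanSpace ℝ (Fin n) × EuclideanSpace ℝ (Fin n) →
      EuclideanSpace ℝ (Fin n) × EuclideanSpace ℝ (Fin n))
    (hXH : ∀ p v, stdSymplecticForm n (XH p) v = fderiv ℝ H p v)
    (φ : ℝ → EuclideanSpace ℝ (Fin n) × EuclideanSpace ℝ (Fin n) →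
      EuclideanSpace ℝ (Fin n) × EuclideanSpace ℝ (Fin n))
    (hφreg : ContDiff ℝ 1 (fun q : ℝ ×
      (EuclideanSpace ℝ (Fin n) × EuclideanSpace ℝ (Fin n)) => φ q.1 q.2))
    (hφ0 : φ 0 = id)
    (hflow : ∀ t p, HasDerivAt (fun s => φ s p) (XH (φ t p)) t) :
    ∀ t p v w,
      stdSymplecticForm n (fderiv ℝ (φ t) p v) (fderiv ℝ (φ t) p w) =
        stdSymplecticForm n v w := by
  have hXH' : ∀ p, stdSymplecticFormL n (XH p) = fderiv ℝ H p :=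
    fun p => ContinuousLinearMap.ext (hXH p)
  have hX : ContDiff ℝ 1 XH :=
    contDiff_of_apply_eq_fderiv (stdSymplecticFormL_injective n) hXH' hH
  intro t p v w
  have hinv := IsInfinitesimalIsometry.apply_apply_eq_of_hasDerivAt
    (fun s => isInfinitesimalIsometry_fderiv_of_apply_eq_fderiv (stdSymplecticFormL_antisymm n)
      hXH' hH (hX.differentiable one_ne_zero (φ s p)))
    (hasDerivAt_fderiv_flow hX hφreg hφ0 hflow p) t v w
  simpa [hφ0] using hinv
end

section
/- Counting critical points of the mirror superpotential of a weighted projective plane: let a, b, c be positive integers. The critical points of w = x + y + z restricted to the hypersurface Y = {x^a y^b z^c = 1} ⊂ (ℂ*)³ are the points where (1, 1, 1) is proportional to the gradient direction (a/x, b/y, c/z), i.e. the points of the set S = { (x, y, z) ∈ ℂ³ | x ≠ 0 ∧ y ≠ 0 ∧ z ≠ 0 ∧ x^a * y^b * z^c = 1 ∧ ∃ μ : ℂ, x = μ * a ∧ y = μ * b ∧ z = μ * c }. Then S is a finite set of cardinality exactly a + b + c. (Indeed, substituting x = μa, y = μb, z = μc into the constraint gives μ^{a+b+c} · a^a b^b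 c^c = 1, which has exactly a + b + c distinct solutions μ ∈ ℂ, each determining a distinct point of S.) -/
open Polynomial

lemma pow_eq_finite_card {n : ℕ} (hn : 0 < n) {k : ℂ} (hk : k ≠ 0) :
    ({μ : ℂ | μ ^ n = k}).Finite ∧ ({μ : ℂ | μ ^ n = k}).ncard = n := by
  have hζ := Complex.isPrimitiveRoot_exp n hn.ne'
  have hset : {μ : ℂ | μ ^ n = k} = ((nthRoots n k).toFinset : Set ℂ) := by
    ext μ
    simp [Polynomial.mem_nthRoots hn]
  obtain ⟨α, hα⟩ := IsAlgClosed.exists_pow_nat_eq k hn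
  have hcard : (nthRoots n k).toFinset.card = n := by
    rw [Multiset.toFinset_card_of_nodup (hζ.nthRoots_nodup hk), hζ.card_nthRoots,
      if_pos ⟨α, hα⟩]
  constructor
  · rw [hset]; exact (nthRoots n k).toFinset.finite_toSet
  · rw [hset, Set.ncard_coe_finset, hcard]

/-- Counting critical points of the mirror superpotential `w = x + y + z` of
the weighted projective plane `ℂℙ²(a,b,c)`: the set of points of the
hypersurface `{x^a y^b z^c = 1} ⊂ (ℂ*)³` at which `(x, y, z) = (μa, μb, μc)`
for some `μ ∈ ℂ` (the critical points of `w` restricted to the hypersurface)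
is finite of cardinality exactly `a + b + c`. -/
theorem mirror_superpotential_critical_points (a b c : ℕ)
    (ha : 0 < a) (hb : 0 < b) (hc : 0 < c) :
    ({ p : ℂ × ℂ × ℂ | p.1 ≠ 0 ∧ p.2.1 ≠ 0 ∧ p.2.2 ≠ 0 ∧
        p.1 ^ a * p.2.1 ^ b * p.2.2 ^ c = 1 ∧
        ∃ μ : ℂ, p.1 = μ * (a : ℂ) ∧ p.2.1 = μ * (b : ℂ) ∧
          p.2.2 = μ * (c : ℂ) }).Finite ∧
    ({ p : ℂ × ℂ × ℂ | p.1 ≠ 0 ∧ p.2.1 ≠ 0 ∧ p.2.2 ≠ 0 ∧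
        p.1 ^ a * p.2.1 ^ b * p.2.2 ^ c = 1 ∧
        ∃ μ : ℂ, p.1 = μ * (a : ℂ) ∧ p.2.1 = μ * (b : ℂ) ∧
          p.2.2 = μ * (c : ℂ) }).ncard = a + b + c := by
  have han : (a : ℂ) ≠ 0 := Nat.cast_ne_zero.mpr ha.ne'
  have hbn : (b : ℂ) ≠ 0 := Nat.cast_ne_zero.mpr hb.ne'
  have hcn : (c : ℂ) ≠ 0 := Nat.cast_ne_zero.mpr hc.ne'
  set K : ℂ := (a : ℂ) ^ a * (b : ℂ) ^ b * (c : ℂ) ^ c with hK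
  have hKne : K ≠ 0 := by
    exact mul_ne_zero (mul_ne_zero (pow_ne_zero _ han) (pow_ne_zero _ hbn)) (pow_ne_zero _ hcn)
  have hn : 0 < a + b + c := by omega
  set T : Set ℂ := {μ : ℂ | μ ^ (a + b + c) = K⁻¹} with hT
  obtain ⟨hTfin, hTcard⟩ := pow_eq_finite_card hn (inv_ne_zero hKne)
  set f : ℂ → ℂ × ℂ × ℂ := fun μ => (μ * a, μ * b, μ * c) with hf
  have hinj : Set.InjOn f T := by
    intro x _ y _ hxy
    have := congrArg Prod.fst hxy
    simpa [hf, mul_left_inj' han] using this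
  have hSeq : { p : ℂ × ℂ × ℂ | p.1 ≠ 0 ∧ p.2.1 ≠ 0 ∧ p.2.2 ≠ 0 ∧
        p.1 ^ a * p.2.1 ^ b * p.2.2 ^ c = 1 ∧
        ∃ μ : ℂ, p.1 = μ * (a : ℂ) ∧ p.2.1 = μ * (b : ℂ) ∧
          p.2.2 = μ * (c : ℂ) } = f '' T := by
    ext ⟨x, y, z⟩
    simp only [Set.mem_setOf_eq, Set.mem_image, hf, hT]
    constructor
    · rintro ⟨hx, hy, hz, heq, μ, rfl, rfl, rfl⟩
      refine ⟨μ, ?_, rfl⟩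
      have : μ ^ (a + b + c) * K = 1 := by
        rw [hK]; rw [mul_pow, mul_pow, mul_pow] at heq
        rw [← heq]; ring
      exact eq_inv_of_mul_eq_one_left this
    · rintro ⟨μ, hμ, heq⟩
      have hμne : μ ≠ 0 := by
        intro h
        rw [h, zero_pow hn.ne'] at hμ
        exact inv_ne_zero hKne hμ.symm
      have hprod : μ ^ (a + b + c) * K = 1 := by
        rw [hμ, inv_mul_cancel₀ hKne]
      injection heq with h1 h23
      injection h23 with h2 h3
      subst h1 h2 h3
      refine ⟨mul_ne_zero hμne han, mul_ne_zero hμne hbn, mul_ne_zero hμne hcn, ?_,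
        μ, rfl, rfl, rfl⟩
      rw [mul_pow, mul_pow, mul_pow, ← hprod, hK]; ring
  rw [hSeq]
  exact ⟨hTfin.image f, by rw [Set.ncard_image_of_injOn hinj, hTcard]⟩
end
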